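/- arXiv:1606.08143 — 4 statements merged into one kernel-verified Lean document; each statement's English description precedes it below -/
import Mathlib

section
/- For every integer k ≥ 1, the total domination number of the hypercube of dimension 2^k + 1 satisfies γ_t(Q_{2^k+1}) = 2^{2^k − k + 1}. -/
open SimpleGraph

/-- The complete graph on two vertices. -/
abbrev K2 : SimpleGraph (Fin 2) := ⊤

/-- `S` is a dominating set of `G`: every vertex not in `S` is adjacent to a vertex of `S`. -/
def IsDominatingSet {V : Type*} (G : SimpleGraph V) (S : Finset V) : Prop :=
  ∀ v : V, v ∉ S → ∃ u ∈ S, G.Adj v u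

/-- `S` is a total dominating set of `G`: every vertex is adjacent to a vertex of `S`. -/
def IsTotalDominatingSet {V : Type*} (G : SimpleGraph V) (S : Finset V) : Prop :=
  ∀ v : V, ∃ u ∈ S, G.Adj v u

/-- The domination number of `G`. -/
noncomputable def dominationNumber {V : Type*} (G : SimpleGraph V) : ℕ :=
  sInf {n : ℕ | ∃ S : Finset V, IsDominatingSet G S ∧ S.card = n}

/-- The total domination number of `G`. -/
noncomputable def totalDominationNumber {V : Type*} (G : SimpleGraph V) : ℕ :=
  sInf {n : ℕ | ∃ S : Finset V, IsTotalDominatingSet G S ∧ S.card = n}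

/-- The `n`-dimensional hypercube: vertices are binary strings of length `n`,
two vertices are adjacent iff they differ in exactly one coordinate. -/
def hypercube (n : ℕ) : SimpleGraph (Fin n → Bool) where
  Adj x y := hammingDist x y = 1
  symm := ⟨fun x y h => by simpa [hammingDist_comm] using h⟩
  loopless := ⟨fun x h => by simp [hammingDist_self] at h⟩

/-!
Upper bound: label the `2^k + 1` coordinates by vectors of `(ZMod 2)^k` so that every vector
occurs. The vertices of zero syndrome form a linear code of size `2^(2^k + 1 - k)`, and every
vertex is adjacent to it: flip a coordinate whose label is the syndrome of the vertex (for a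
codeword, one labelled `0`).

Lower bound: let `S` be a total dominating set of an `r`-regular graph, `r` odd, in which any two
distinct vertices have an even number of common neighbours, and let `t y` be the number of
neighbours of `y` in `S`. Around a vertex outside `S` the values of `t` sum to the number of
(common neighbour, vertex of `S`) pairs, an even number that is at least `r`, hence at least
`r + 1`. Double counting `∑ t`, `∑ t²` and these neighbourhood sums, together with
`(t - 1)(t - 2) ≥ 0`, gives `|V| ≤ (r - 1)|S|`, which for `Q_{2^k+1}` is `2^(2^k+1) ≤ 2^k |S|`.
-/

open Finset

lemma Finset.even_card_of_involution {α : Type*} {s : Finset α} (g : α → α)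
    (hg_mem : ∀ a ∈ s, g a ∈ s) (hg_invol : ∀ a ∈ s, g (g a) = a) (hg_ne : ∀ a ∈ s, g a ≠ a) :
    Even #s := by
  rw [← ZMod.natCast_eq_zero_iff_even, card_eq_sum_ones, Nat.cast_sum, Nat.cast_one]
  exact sum_involution (fun a _ => g a) (fun _ _ => rfl) (fun a ha _ => hg_ne a ha) hg_mem hg_invol

lemma card_filter_eq_zero_mul_card_of_surjective {F G G' : Type*} [AddGroup G] [AddGroup G']
    [Fintype G] [DecidableEq G'] [FunLike F G G'] [AddMonoidHomClass F G G'] {f : F}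
    (hf : Function.Surjective f) : #{x | f x = 0} * Nat.card G' = Nat.card G := by
  rw [← (f : G →+ G').ker.card_mul_index, AddSubgroup.index_ker,
    (f : G →+ G').range_eq_top_of_surjective hf, AddSubgroup.card_top, ← Fintype.card_subtype,
    ← Nat.card_eq_fintype_card]
  rfl

lemma hammingNorm_zmod_two_eq_one_iff {ι : Type*} [Fintype ι] [DecidableEq ι] {x : ι → ZMod 2} :
    hammingNorm x = 1 ↔ ∃ i, x = Pi.single i 1 := by
  constructor
  · intro h
    obtain ⟨i, hi⟩ := card_eq_one.mp h
    have hsupp : ∀ j, x j ≠ 0 ↔ j = i := fun j => by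
      simpa using congrArg (j ∈ ·) hi
    refine ⟨i, funext fun j => ?_⟩
    rcases eq_or_ne j i with rfl | hj
    · rw [Pi.single_eq_same]
      exact Fin.eq_one_of_ne_zero _ ((hsupp j).mpr rfl)
    · simpa [hj] using (hsupp j).not.mpr hj
  · rintro ⟨i, rfl⟩
    simp [hammingNorm, Pi.single_apply, filter_eq']

section TotalDomination

variable {V : Type*} {G : SimpleGraph V}

lemma totalDominationNumber_eq_of_forall_card_le {S : Finset V} (hS : IsTotalDominatingSet G S)
    (hmin : ∀ T, IsTotalDominatingSet G T → #S ≤ #T) : totalDominationNumber G = #S :=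
  le_antisymm (Nat.sInf_le ⟨S, hS, rfl⟩)
    (le_csInf ⟨_, S, hS, rfl⟩ fun _ ⟨T, hT, hn⟩ => hn ▸ hmin T hT)

lemma IsTotalDominatingSet.map_iso {W : Type*} {H : SimpleGraph W} (e : G ≃g H) {S : Finset V}
    (hS : IsTotalDominatingSet G S) : IsTotalDominatingSet H (S.map e.toEquiv.toEmbedding) := by
  intro w
  obtain ⟨u, hu, hadj⟩ := hS (e.symm w)
  exact ⟨e u, mem_map_of_mem _ hu, by simpa using e.map_adj_iff.mpr hadj⟩

lemma SimpleGraph.Iso.totalDominationNumber_eq {W : Type*} {H : SimpleGraph W} (e : G ≃g H) :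
    totalDominationNumber G = totalDominationNumber H := by
  unfold totalDominationNumber
  congr 1
  ext n
  constructor
  · rintro ⟨S, hS, rfl⟩
    exact ⟨_, hS.map_iso e, card_map _⟩
  · rintro ⟨T, hT, rfl⟩
    exact ⟨_, hT.map_iso e.symm, by simp⟩

end TotalDomination

namespace SimpleGraph

variable {V : Type*} [Fintype V] (G : SimpleGraph V) [DecidableRel G.Adj]

lemma sum_sum_neighborFinset (A : Finset V) (f : V → ℕ) :
    ∑ z ∈ A, ∑ y ∈ G.neighborFinset z, f y = ∑ y, #{z ∈ A | G.Adj z y} * f y := by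
  simp_rw [neighborFinset_eq_filter, sum_filter]
  rw [sum_comm]
  simp_rw [← sum_filter, sum_const, smul_eq_mul]

lemma sum_card_filter_adj_eq_sum_card_inter [DecidableEq V] (S T : Finset V) :
    ∑ y ∈ T, #{z ∈ S | G.Adj z y} = ∑ s ∈ S, #(T ∩ G.neighborFinset s) := by
  simp_rw [card_filter, ← filter_mem_eq_inter, card_filter, mem_neighborFinset]
  rw [sum_comm]

end SimpleGraph

section LowerBound

variable {V : Type*} {G : SimpleGraph V} [DecidableRel G.Adj]

lemma IsTotalDominatingSet.card_filter_adj_pos {S : Finset V} (hS : IsTotalDominatingSet G S)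
    (y : V) : 0 < #{s ∈ S | G.Adj s y} := by
  obtain ⟨u, hu, hadj⟩ := hS y
  exact card_pos.mpr ⟨u, mem_filter.mpr ⟨hu, hadj.symm⟩⟩

variable [Fintype V] [DecidableEq V] {r : ℕ}

lemma IsTotalDominatingSet.add_one_le_sum_card_filter_adj (hreg : G.IsRegularOfDegree r)
    (hodd : Odd r) (hcommon : ∀ u v, u ≠ v → Even #(G.neighborFinset u ∩ G.neighborFinset v))
    {S : Finset V} (hS : IsTotalDominatingSet G S) {z : V} (hz : z ∉ S) :
    r + 1 ≤ ∑ y ∈ G.neighborFinset z, #{s ∈ S | G.Adj s y} := by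
  have heven : Even (∑ y ∈ G.neighborFinset z, #{s ∈ S | G.Adj s y}) := by
    rw [G.sum_card_filter_adj_eq_sum_card_inter]
    exact even_sum _ fun s hs => hcommon z s (ne_of_mem_of_not_mem hs hz).symm
  have hge : r ≤ ∑ y ∈ G.neighborFinset z, #{s ∈ S | G.Adj s y} := by
    calc r = ∑ _y ∈ G.neighborFinset z, 1 := by
          rw [sum_const, smul_eq_mul, mul_one, card_neighborFinset_eq_degree, hreg.degree_eq]
      _ ≤ _ := sum_le_sum fun y _ => hS.card_filter_adj_pos y
  rcases hodd with ⟨a, rfl⟩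
  rcases heven with ⟨b, hb⟩
  omega

theorem IsTotalDominatingSet.card_le_mul_card (hreg : G.IsRegularOfDegree r) (hr : 1 < r)
    (hodd : Odd r) (hcommon : ∀ u v, u ≠ v → Even #(G.neighborFinset u ∩ G.neighborFinset v))
    {S : Finset V} (hS : IsTotalDominatingSet G S) :
    Fintype.card V ≤ (r - 1) * #S := by
  set t : V → ℕ := fun y => #{s ∈ S | G.Adj s y}
  have hsum_t : ∑ y, t y = r * #S := by
    have := G.sum_sum_neighborFinset S 1
    simp_rw [Pi.one_apply, sum_const, smul_eq_mul, mul_one, card_neighborFinset_eq_degree,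
      hreg.degree_eq] at this
    rw [← this, sum_const, smul_eq_mul, mul_comm]
  have hsum_sq : ∑ s ∈ S, ∑ y ∈ G.neighborFinset s, t y = ∑ y, t y * t y :=
    G.sum_sum_neighborFinset S t
  have hsum_all : ∑ z, ∑ y ∈ G.neighborFinset z, t y = r * (r * #S) := by
    rw [G.sum_sum_neighborFinset, ← hsum_t, mul_sum]
    refine sum_congr rfl fun y _ => ?_
    simp_rw [G.adj_comm _ y, ← neighborFinset_eq_filter, card_neighborFinset_eq_degree,
      hreg.degree_eq]
  have hsum_out : (Fintype.card V - #S) * (r + 1) ≤ ∑ z ∈ Sᶜ, ∑ y ∈ G.neighborFinset z, t y := by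
    rw [← card_compl, ← smul_eq_mul, ← sum_const]
    exact sum_le_sum fun z hz =>
      hS.add_one_le_sum_card_filter_adj hreg hodd hcommon (mem_compl.mp hz)
  -- `(t - 1) (t - 2) ≥ 0` for every positive integer `t`
  have hsum_sq_ge : 3 * ∑ y, t y ≤ ∑ y, t y * t y + 2 * Fintype.card V := by
    rw [mul_sum, ← card_univ, card_eq_sum_ones, mul_sum, ← sum_add_distrib]
    refine sum_le_sum fun y _ => ?_
    obtain h | h := (show 1 ≤ t y from hS.card_filter_adj_pos y).eq_or_lt
    · simp [t, ← h]
    · nlinarith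
  rw [← sum_add_sum_compl S, hsum_sq] at hsum_all
  have hSV : #S ≤ Fintype.card V := card_le_univ S
  have hmain : (r - 1) * Fintype.card V ≤ (r - 1) * ((r - 1) * #S) := by
    zify [hr.le, hSV] at *
    nlinarith
  exact Nat.le_of_mul_le_mul_left hmain (by omega)

end LowerBound

namespace SimpleGraph

def hammingGraph (ι β : Type*) [Fintype ι] [DecidableEq β] : SimpleGraph (ι → β) where
  Adj x y := hammingDist x y = 1
  symm := ⟨fun x y h => by rwa [hammingDist_comm]⟩
  loopless := ⟨fun x h => by simp at h⟩

variable {ι : Type*} [Fintype ι]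

instance {β : Type*} [DecidableEq β] : DecidableRel (hammingGraph ι β).Adj :=
  fun x y => inferInstanceAs (Decidable (hammingDist x y = 1))

lemma hypercube_eq_hammingGraph (n : ℕ) : hypercube n = hammingGraph (Fin n) Bool := rfl

def hammingGraphCongr {β γ : Type*} [DecidableEq β] [DecidableEq γ] (e : β ≃ γ) :
    hammingGraph ι β ≃g hammingGraph ι γ where
  toEquiv := Equiv.arrowCongr (Equiv.refl ι) e
  map_rel_iff' {x y} := by
    change hammingDist (fun i => e (x i)) (fun i => e (y i)) = 1 ↔ hammingDist x y = 1
    rw [hammingDist_comp _ fun _ => e.injective]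

variable [DecidableEq ι]

lemma hammingGraph_zmod_two_adj_iff {x y : ι → ZMod 2} :
    (hammingGraph ι (ZMod 2)).Adj x y ↔ ∃ i, y = x + Pi.single i 1 := by
  change hammingDist x y = 1 ↔ _
  simp_rw [hammingDist_eq_hammingNorm, hammingNorm_zmod_two_eq_one_iff, neg_add_eq_iff_eq_add]

lemma hammingGraph_zmod_two_isRegularOfDegree :
    (hammingGraph ι (ZMod 2)).IsRegularOfDegree (Fintype.card ι) := fun x => by
  have hN : (hammingGraph ι (ZMod 2)).neighborFinset x = univ.image (x + Pi.single · 1) := by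
    ext y
    simp [hammingGraph_zmod_two_adj_iff, eq_comm]
  rw [← card_neighborFinset_eq_degree, hN, card_image_of_injective, card_univ]
  exact (add_right_injective x).comp fun i j h => by
    simpa [Pi.single_apply] using congrFun h i

lemma hammingGraph_zmod_two_even_card_neighborFinset_inter {u v : ι → ZMod 2} (huv : u ≠ v) :
    Even #((hammingGraph ι (ZMod 2)).neighborFinset u ∩
      (hammingGraph ι (ZMod 2)).neighborFinset v) := by
  have hreflect : ∀ a b y : ι → ZMod 2, hammingDist a (a + b - y) = hammingDist y b :=
      fun a b y => by
    rw [hammingDist_eq_hammingNorm, hammingDist_eq_hammingNorm]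
    congr 1
    abel
  refine even_card_of_involution (u + v - ·) (fun y hy => ?_) (fun y _ => by abel) fun y _ h => ?_
  · simp only [mem_inter, mem_neighborFinset] at hy ⊢
    change hammingDist _ _ = 1 ∧ hammingDist _ _ = 1 at hy ⊢
    rw [hreflect, add_comm, hreflect, hammingDist_comm y, hammingDist_comm y]
    exact hy.symm
  · have hchar : ∀ z : ι → ZMod 2, z + z = 0 :=
      fun z => funext fun i => CharTwo.add_self_eq_zero (z i)
    refine huv (eq_of_sub_eq_zero ?_)
    calc u - v = (u + v - y) + y - (v + v) := by abel
      _ = 0 := by rw [h, hchar, hchar, sub_zero]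

end SimpleGraph

section ParityCheckCode

variable {ι W : Type*} [Fintype ι] [DecidableEq ι] [AddCommGroup W] [Module (ZMod 2) W]
  [DecidableEq W]

def parityCheckCode (c : ι → W) : Finset (ι → ZMod 2) :=
  {x | Fintype.linearCombination (ZMod 2) c x = 0}

variable {c : ι → W}

lemma isTotalDominatingSet_parityCheckCode (hc : Function.Surjective c) :
    IsTotalDominatingSet (hammingGraph ι (ZMod 2)) (parityCheckCode c) := by
  intro v
  obtain ⟨i, hi⟩ := hc (Fintype.linearCombination (ZMod 2) c v)
  refine ⟨v + Pi.single i 1, ?_, hammingGraph_zmod_two_adj_iff.mpr ⟨i, rfl⟩⟩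
  simp only [parityCheckCode, mem_filter, mem_univ, true_and, map_add,
    Fintype.linearCombination_apply_single, one_smul, hi]
  rw [← two_smul (ZMod 2), show (2 : ZMod 2) = 0 from rfl, zero_smul]

lemma card_parityCheckCode_mul_card [Fintype W] (hc : Function.Surjective c) :
    #(parityCheckCode c) * Fintype.card W = 2 ^ Fintype.card ι := by
  have hsurj : Function.Surjective (Fintype.linearCombination (ZMod 2) c) := fun w => by
    obtain ⟨i, rfl⟩ := hc w
    exact ⟨Pi.single i 1, by simp⟩
  have := card_filter_eq_zero_mul_card_of_surjective hsurj
  rwa [Nat.card_eq_fintype_card, Nat.card_eq_fintype_card, Fintype.card_fun, ZMod.card] at this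

end ParityCheckCode

/-- For every `k ≥ 1`, `γ_t(Q_{2^k+1}) = 2^(2^k - k + 1)`. -/
theorem totalDomination_hypercube_pow_add_one (k : ℕ) (hk : 1 ≤ k) :
    totalDominationNumber (hypercube (2 ^ k + 1)) = 2 ^ (2 ^ k - k + 1) := by
  obtain ⟨e⟩ := Function.Embedding.nonempty_of_card_le (α := Fin k → ZMod 2)
    (β := Fin (2 ^ k + 1)) (by simp)
  have hc : Function.Surjective (Function.invFun e) := Function.invFun_surjective e.injective
  have hcode := card_parityCheckCode_mul_card hc
  simp only [Fintype.card_fin, Fintype.card_fun, ZMod.card] at hcode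
  have hodd : Odd (2 ^ k + 1) := (Nat.even_pow.mpr ⟨even_two, by omega⟩).add_one
  rw [hypercube_eq_hammingGraph,
    (hammingGraphCongr (γ := ZMod 2) finTwoEquiv.symm).totalDominationNumber_eq,
    totalDominationNumber_eq_of_forall_card_le (isTotalDominatingSet_parityCheckCode hc)]
  · refine Nat.eq_of_mul_eq_mul_right (by positivity : 0 < 2 ^ k) (hcode.trans ?_)
    rw [← pow_add]
    have := Nat.lt_two_pow_self (n := k)
    congr 1
    omega
  · intro T hT
    have hT := hT.card_le_mul_card hammingGraph_zmod_two_isRegularOfDegree (by simp)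
      (by simpa using hodd) fun _ _ => hammingGraph_zmod_two_even_card_neighborFinset_inter
    simp only [Fintype.card_fun, Fintype.card_fin, ZMod.card, add_tsub_cancel_right] at hT
    exact Nat.le_of_mul_le_mul_right (hcode.trans_le (hT.trans_eq (mul_comm _ _)))
      (by positivity)
end

section
/- For every integer k ≥ 1, the domination number of the hypercube of dimension 2^k − 1 satisfies γ(Q_{2^k−1}) = 2^{2^k − k − 1}. -/
open SimpleGraph

/-! The lower bound is the sphere-covering bound: `Q_n` is `n`-regular, so each vertex
dominates `n + 1 = 2^k` vertices and a dominating set has at least `2^n / 2^k` elements.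
It is attained by the Hamming code, the kernel of the syndrome map `x ↦ ∑_{x i = 1} h i`
into `𝔽₂^k`, where `h` runs through the `2^k - 1` nonzero vectors. A word with nonzero
syndrome `h i` becomes a codeword by flipping coordinate `i`, and since the syndrome map
is surjective there are `2^n / 2^k` codewords. -/

open Finset SimpleGraph

theorem hammingDist_eq_one_iff {ι : Type*} [Fintype ι] [DecidableEq ι] {x y : ι → Bool} :
    hammingDist x y = 1 ↔ ∃ i, y = Function.update x i (!x i) := by
  simp only [hammingDist, card_eq_one, eq_singleton_iff_unique_mem, mem_filter, mem_univ,
    true_and, funext_iff, Function.update_apply]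
  refine exists_congr fun i => ⟨fun ⟨hi, huniq⟩ j => ?_, fun h => ⟨?_, fun j hj => ?_⟩⟩
  · split_ifs with hj
    · subst hj
      simpa [Bool.eq_not, eq_comm] using hi
    · by_contra hne
      exact hj (huniq j (Ne.symm hne))
  · simp [h i]
  · by_contra hne
    simp [h j, hne] at hj

section Domination

variable {V : Type*} {G : SimpleGraph V}

theorem dominationNumber_eq_card {S : Finset V} (hS : IsDominatingSet G S)
    (hmin : ∀ T, IsDominatingSet G T → S.card ≤ T.card) : dominationNumber G = S.card :=
  le_antisymm (Nat.sInf_le ⟨S, hS, rfl⟩)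
    (le_csInf ⟨_, S, hS, rfl⟩ fun _ ⟨T, hT, hcard⟩ => hcard ▸ hmin T hT)

theorem IsDominatingSet.card_le_mul [Fintype V] [DecidableEq V] [DecidableRel G.Adj]
    {S : Finset V} {d : ℕ} (hS : IsDominatingSet G S) (hd : ∀ v, G.degree v ≤ d) :
    Fintype.card V ≤ S.card * (d + 1) := by
  have hcover : (univ : Finset V) ⊆ S.biUnion fun u => insert u (G.neighborFinset u) := by
    intro v _
    rw [mem_biUnion]
    by_cases hv : v ∈ S
    · exact ⟨v, hv, mem_insert_self v _⟩
    · obtain ⟨u, hu, hvu⟩ := hS v hv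
      exact ⟨u, hu, mem_insert_of_mem ((mem_neighborFinset G u v).2 hvu.symm)⟩
  calc Fintype.card V ≤ (S.biUnion fun u => insert u (G.neighborFinset u)).card :=
        card_le_card hcover
    _ ≤ ∑ u ∈ S, (insert u (G.neighborFinset u)).card := card_biUnion_le
    _ ≤ ∑ _u ∈ S, (d + 1) :=
        sum_le_sum fun u _ => (card_insert_le _ _).trans (by simpa using hd u)
    _ = S.card * (d + 1) := by rw [sum_const, smul_eq_mul]

end Domination

section Hypercube

variable {n : ℕ}

instance : DecidableRel (hypercube n).Adj :=
  fun x y => inferInstanceAs (Decidable (hammingDist x y = 1))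

theorem hypercube_neighborFinset (x : Fin n → Bool) :
    (hypercube n).neighborFinset x = univ.image fun i => Function.update x i (!x i) := by
  ext y
  simp only [mem_neighborFinset, mem_image, mem_univ, true_and, eq_comm (b := y)]
  exact hammingDist_eq_one_iff

theorem hypercube_isRegularOfDegree : (hypercube n).IsRegularOfDegree n := by
  intro x
  rw [← card_neighborFinset_eq_degree, hypercube_neighborFinset, card_image_of_injective,
    card_univ, Fintype.card_fin]
  intro i j hij
  by_contra hne
  have hi : (!x i) = x i := by simpa [Function.update_of_ne hne] using congrFun hij i
  exact Bool.not_ne_self _ hi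

theorem IsDominatingSet.two_pow_le_card_mul {S : Finset (Fin n → Bool)}
    (hS : IsDominatingSet (hypercube n) S) : 2 ^ n ≤ S.card * (n + 1) := by
  simpa using hS.card_le_mul fun x => (hypercube_isRegularOfDegree x).le

end Hypercube

section HammingCode

variable {n : ℕ} {W : Type*} [AddCommGroup W] [Module (ZMod 2) W]

def boolEquivZModTwo : Bool ≃ ZMod 2 where
  toFun b := cond b 1 0
  invFun z := decide (z = 1)
  left_inv b := by cases b <;> rfl
  right_inv z := by fin_cases z <;> rfl

theorem boolEquivZModTwo_not (b : Bool) : boolEquivZModTwo (!b) = boolEquivZModTwo b + 1 := by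
  cases b <;> rfl

def syndrome (h : Fin n → W) (x : Fin n → Bool) : W :=
  Fintype.linearCombination (ZMod 2) h (boolEquivZModTwo ∘ x)

theorem syndrome_update_not (h : Fin n → W) (x : Fin n → Bool) (i : Fin n) :
    syndrome h (Function.update x i (!x i)) = syndrome h x + h i := by
  have hflip : boolEquivZModTwo ∘ Function.update x i (!x i) =
      boolEquivZModTwo ∘ x + Pi.single i 1 := by
    ext j
    rcases eq_or_ne j i with rfl | hj
    · simp [boolEquivZModTwo_not]
    · simp [hj]
  rw [syndrome, hflip, map_add, Fintype.linearCombination_apply_single, one_smul, syndrome]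

variable [DecidableEq W]

def hammingCode (h : Fin n → W) : Finset (Fin n → Bool) :=
  univ.filter fun x => syndrome h x = 0

theorem hammingCode_isDominatingSet {h : Fin n → W} (hh : ∀ w ≠ 0, w ∈ Set.range h) :
    IsDominatingSet (hypercube n) (hammingCode h) := by
  intro x hx
  obtain ⟨i, hi⟩ := hh (syndrome h x) (by simpa [hammingCode] using hx)
  refine ⟨Function.update x i (!x i), ?_, hammingDist_eq_one_iff.2 ⟨i, rfl⟩⟩
  simp [hammingCode, syndrome_update_not, hi, ZModModule.add_self]

theorem card_hammingCode_mul [Fintype W] {h : Fin n → W} (hh : ∀ w ≠ 0, w ∈ Set.range h) :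
    (hammingCode h).card * Fintype.card W = 2 ^ n := by
  set f := (Fintype.linearCombination (ZMod 2) h).toAddMonoidHom
  have hsurj : Function.Surjective f := by
    refine (span_range_eq_top_iff_surjective_fintypeLinearCombination _ h).1 ?_
    refine Submodule.eq_top_iff'.2 fun w => ?_
    rcases eq_or_ne w 0 with rfl | hw
    · exact Submodule.zero_mem _
    · exact Submodule.subset_span (hh w hw)
  have hcode : (hammingCode h).card = Nat.card f.ker := by
    rw [hammingCode, ← Fintype.card_subtype, ← Nat.card_eq_fintype_card]
    exact Nat.card_congr ((Equiv.piCongrRight fun _ => boolEquivZModTwo).subtypeEquiv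
      fun x => (AddMonoidHom.mem_ker (f := f)).symm)
  rw [hcode, Fintype.card_eq_nat_card, ← AddSubgroup.card_top (G := W),
    ← AddMonoidHom.range_eq_top.2 hsurj, ← AddSubgroup.index_ker, AddSubgroup.card_mul_index]
  simp

end HammingCode

theorem exists_forall_ne_zero_mem_range {W : Type*} [Zero W] [Fintype W] [DecidableEq W] {n : ℕ}
    (hn : Fintype.card W = n + 1) : ∃ h : Fin n → W, ∀ w ≠ 0, w ∈ Set.range h := by
  have e : {w : W // w ≠ 0} ≃ Fin n :=
    Fintype.equivFinOfCardEq (by rw [Fintype.card_subtype_compl, Fintype.card_subtype_eq]; omega)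
  exact ⟨fun i => e.symm i, fun w hw => ⟨e ⟨w, hw⟩, by simp⟩⟩

theorem domination_hypercube_pow_sub_one_general (k : ℕ) :
    dominationNumber (hypercube (2 ^ k - 1)) = 2 ^ (2 ^ k - k - 1) := by
  have hk : k < 2 ^ k := Nat.lt_two_pow_self
  have hcard : Fintype.card (Fin k → ZMod 2) = 2 ^ k - 1 + 1 := by
    rw [Fintype.card_fun, ZMod.card, Fintype.card_fin]; omega
  obtain ⟨h, hh⟩ := exists_forall_ne_zero_mem_range hcard
  have hcode := card_hammingCode_mul hh
  rw [hcard] at hcode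
  have hsplit : 2 ^ (2 ^ k - 1) = 2 ^ (2 ^ k - k - 1) * (2 ^ k - 1 + 1) := by
    rw [Nat.sub_add_cancel Nat.one_le_two_pow, ← pow_add]; congr 1; omega
  rw [dominationNumber_eq_card (hammingCode_isDominatingSet hh) fun T hT =>
    Nat.le_of_mul_le_mul_right (hcode.trans_le hT.two_pow_le_card_mul) (Nat.succ_pos _)]
  exact Nat.eq_of_mul_eq_mul_right (Nat.succ_pos _) (hcode.trans hsplit)

/-- For every `k ≥ 1`, `γ(Q_{2^k - 1}) = 2^(2^k - k - 1)`. -/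
theorem domination_hypercube_pow_sub_one (k : ℕ) (hk : 1 ≤ k) :
    dominationNumber (hypercube (2 ^ k - 1)) = 2 ^ (2 ^ k - k - 1) :=
  domination_hypercube_pow_sub_one_general k
end

section
/- If G is a finite bipartite graph with at least one vertex, then the total domination number of the prism of G equals its paired-domination number: γ_t(G □ K₂) = γ_pr(G □ K₂). -/
open SimpleGraph

/-- `S` is a paired-dominating set of `G`: every vertex is adjacent to a vertex of `S`,
and the subgraph induced by `S` contains a perfect matching, encoded as a fixed-point-free
involution on `S` pairing each vertex of `S` with an adjacent vertex of `S`. -/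
def IsPairedDominatingSet {V : Type*} (G : SimpleGraph V) (S : Finset V) : Prop :=
  (∀ v : V, ∃ u ∈ S, G.Adj v u) ∧
    ∃ f : V → V, ∀ v ∈ S, f v ∈ S ∧ G.Adj v (f v) ∧ f (f v) = v

/-- The paired-domination number of `G`. -/
noncomputable def pairedDominationNumber {V : Type*} (G : SimpleGraph V) : ℕ :=
  sInf {n : ℕ | ∃ S : Finset V, IsPairedDominatingSet G S ∧ S.card = n}

/-!
Every paired-dominating set is total, so `γ_t ≤ γ_pr`. Conversely, a dominating set `C` of `G`
gives the paired-dominating set `C × K₂` of the prism, each `(v, i)` paired with `(v, i + 1)`, so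
`γ_pr(G □ K₂) ≤ 2 γ(G)`. If `c` is a 2-colouring of `G` and `D` totally dominates the prism,
the two diagonals `{v | (v, c v + e) ∈ D}` split `D` and each dominates `G`: the vertex
`(v, c v + e + 1)` is dominated either vertically by `(v, c v + e)` or by some
`(u, c v + e + 1)` with `u ~ v`, and then `c u = c v + 1` puts `u` on diagonal `e`.
Hence `2 γ(G) ≤ γ_t(G □ K₂)`.
-/

namespace Fin

lemma add_one_ne_self (i : Fin 2) : i + 1 ≠ i := by
  fin_cases i <;> decide

lemma add_one_add_one_eq_self (i : Fin 2) : i + 1 + 1 = i := by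
  fin_cases i <;> rfl

lemma eq_add_one_of_ne {i j : Fin 2} (h : i ≠ j) : j = i + 1 := by
  fin_cases i <;> fin_cases j <;> simp_all

end Fin

section Domination

variable {V : Type*} (G : SimpleGraph V)

lemma isDominatingSet_univ [Fintype V] : IsDominatingSet G Finset.univ :=
  fun v hv => absurd (Finset.mem_univ v) hv

lemma exists_isTotalDominatingSet_card_eq (h : ∃ S, IsTotalDominatingSet G S) :
    ∃ S, IsTotalDominatingSet G S ∧ S.card = totalDominationNumber G :=
  Nat.sInf_mem (s := {n | ∃ S, IsTotalDominatingSet G S ∧ S.card = n})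
    (h.elim fun S hS => ⟨S.card, S, hS, rfl⟩)

lemma totalDominationNumber_le_pairedDominationNumber (h : ∃ S, IsPairedDominatingSet G S) :
    totalDominationNumber G ≤ pairedDominationNumber G := by
  obtain ⟨S, hS, hcard⟩ := Nat.sInf_mem (s := {n | ∃ S, IsPairedDominatingSet G S ∧ S.card = n})
    (h.elim fun S hS => ⟨S.card, S, hS, rfl⟩)
  exact Nat.sInf_le ⟨S, hS.1, hcard⟩

end Domination

section Prism

variable {V : Type*} (G : SimpleGraph V)

lemma prism_adj_add_one (v : V) (i : Fin 2) : (G □ K2).Adj (v, i) (v, i + 1) :=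
  boxProd_adj.2 (Or.inr ⟨(Fin.add_one_ne_self i).symm, rfl⟩)

lemma isPairedDominatingSet_prism [Fintype V] {C : Finset V} (hC : IsDominatingSet G C) :
    IsPairedDominatingSet (G □ K2) (C ×ˢ Finset.univ) := by
  refine ⟨fun ⟨v, i⟩ => ?_, fun p => (p.1, p.2 + 1), fun ⟨v, i⟩ hv => ?_⟩
  · by_cases hv : v ∈ C
    · exact ⟨(v, i + 1), by simpa using hv, prism_adj_add_one G v i⟩
    · obtain ⟨u, hu, hadj⟩ := hC v hv
      exact ⟨(u, i), by simpa using hu, boxProd_adj.2 (Or.inl ⟨hadj, rfl⟩)⟩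
  · simp only [Finset.mem_product, Finset.mem_univ, and_true] at hv
    exact ⟨by simpa using hv, prism_adj_add_one G v i, by simp [Fin.add_one_add_one_eq_self]⟩

lemma pairedDominationNumber_prism_le [Fintype V] {C : Finset V} (hC : IsDominatingSet G C) :
    pairedDominationNumber (G □ K2) ≤ 2 * C.card :=
  Nat.sInf_le ⟨_, isPairedDominatingSet_prism G hC, by simp [mul_comm]⟩

variable [Fintype V] [DecidableEq V]

def diagonalSection (c : V → Fin 2) (D : Finset (V × Fin 2)) (e : Fin 2) : Finset V :=
  Finset.univ.filter fun v => (v, c v + e) ∈ D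

lemma card_diagonalSection_add (c : V → Fin 2) (D : Finset (V × Fin 2)) :
    (diagonalSection c D 0).card + (diagonalSection c D 1).card = D.card := by
  rw [← Fin.sum_univ_two fun e => (diagonalSection c D e).card]
  simp only [diagonalSection, Finset.card_filter]
  rw [Finset.sum_comm]
  calc ∑ v, ∑ e, (if (v, c v + e) ∈ D then 1 else 0)
      = ∑ v, ∑ i, (if (v, i) ∈ D then 1 else 0) :=
        Finset.sum_congr rfl fun v _ => Fintype.sum_equiv (Equiv.addLeft (c v)) _ _ fun _ => rfl
    _ = D.card := by rw [← Fintype.sum_prod_type', ← Finset.card_filter]; simp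

lemma isDominatingSet_diagonalSection (c : G.Coloring (Fin 2))
    {D : Finset (V × Fin 2)} (hD : IsTotalDominatingSet (G □ K2) D) (e : Fin 2) :
    IsDominatingSet G (diagonalSection c D e) := by
  intro v hv
  simp only [diagonalSection, Finset.mem_filter, Finset.mem_univ, true_and] at hv ⊢
  obtain ⟨⟨u, j⟩, hu, hadj⟩ := hD (v, c v + e + 1)
  rcases boxProd_adj.1 hadj with ⟨hvu, hj⟩ | ⟨hK, hvu⟩ <;> dsimp only at *
  · refine ⟨u, ?_, hvu⟩
    rwa [Fin.eq_add_one_of_ne (c.valid hvu), add_right_comm, hj]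
  · rw [← hvu, Fin.eq_add_one_of_ne hK, Fin.add_one_add_one_eq_self] at hu
    exact absurd hu hv

lemma exists_isDominatingSet_two_mul_card_le (hG : G.Colorable 2)
    {D : Finset (V × Fin 2)} (hD : IsTotalDominatingSet (G □ K2) D) :
    ∃ C, IsDominatingSet G C ∧ 2 * C.card ≤ D.card := by
  obtain ⟨c⟩ := hG
  have hsum := card_diagonalSection_add c D
  rcases le_total (diagonalSection c D 0).card (diagonalSection c D 1).card with h | h
  · exact ⟨_, isDominatingSet_diagonalSection G c hD 0, by omega⟩
  · exact ⟨_, isDominatingSet_diagonalSection G c hD 1, by omega⟩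

end Prism

theorem totalDomination_eq_pairedDomination_of_bipartite_prism_general {V : Type*} [Fintype V]
    (G : SimpleGraph V) (hbip : G.Colorable 2) :
    totalDominationNumber (G □ K2) = pairedDominationNumber (G □ K2) := by
  classical
  have hpaired := isPairedDominatingSet_prism G (isDominatingSet_univ G)
  obtain ⟨D, hD, hDcard⟩ := exists_isTotalDominatingSet_card_eq _ ⟨_, hpaired.1⟩
  obtain ⟨C, hC, hCcard⟩ := exists_isDominatingSet_two_mul_card_le G hbip hD
  refine le_antisymm (totalDominationNumber_le_pairedDominationNumber _ ⟨_, hpaired⟩) ?_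
  calc pairedDominationNumber (G □ K2) ≤ 2 * C.card := pairedDominationNumber_prism_le G hC
    _ ≤ D.card := hCcard
    _ = totalDominationNumber (G □ K2) := hDcard

/-- If `G` is a finite bipartite graph with at least one vertex, then
`γ_t(G □ K₂) = γ_pr(G □ K₂)`. -/
theorem totalDomination_eq_pairedDomination_of_bipartite_prism {V : Type*} [Fintype V]
    [Nonempty V] (G : SimpleGraph V) (hbip : G.Colorable 2) :
    totalDominationNumber (G □ K2) = pairedDominationNumber (G □ K2) :=
  totalDomination_eq_pairedDomination_of_bipartite_prism_general G hbip
end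

section
/- If G is a finite bipartite graph with at least one vertex, then the total domination number of the prism of G equals its total restrained domination number: γ_t(G □ K₂) = γ_tr(G □ K₂). -/
open SimpleGraph

/-- `S` is a total restrained dominating set of `G`: every vertex is adjacent to a vertex
of `S`, and every vertex outside `S` has a neighbor outside `S`. -/
def IsTotalRestrainedDominatingSet {V : Type*} (G : SimpleGraph V) (S : Finset V) : Prop :=
  (∀ v : V, ∃ u ∈ S, G.Adj v u) ∧ ∀ v : V, v ∉ S → ∃ u : V, u ∉ S ∧ G.Adj v u

/-- The total restrained domination number of `G`. -/
noncomputable def totalRestrainedDominationNumber {V : Type*} (G : SimpleGraph V) : ℕ :=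
  sInf {n : ℕ | ∃ S : Finset V, IsTotalRestrainedDominatingSet G S ∧ S.card = n}

lemma fin2_ne_add_one : ∀ a : Fin 2, a ≠ a + 1 := by decide

lemma fin2_eq_of_ne_add_one : ∀ a b : Fin 2, a ≠ b + 1 → a = b := by decide

/-- If `G` is a finite bipartite graph with at least one vertex, then
`γ_t(G □ K₂) = γ_tr(G □ K₂)`. -/
theorem totalDomination_eq_totalRestrainedDomination_of_bipartite_prism {V : Type*} [Fintype V]
    [Nonempty V] (G : SimpleGraph V) (hbip : G.Colorable 2) :
    totalDominationNumber (G □ K2) = totalRestrainedDominationNumber (G □ K2) := by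
  classical
  set H := G □ K2 with hH
  -- the universal set is a total (restrained) dominating set
  have huniv : IsTotalDominatingSet H (Finset.univ : Finset (V × Fin 2)) := by
    intro v
    refine ⟨(v.1, v.2 + 1), Finset.mem_univ _, ?_⟩
    exact Or.inr ⟨fin2_ne_add_one v.2, rfl⟩
  have hAne : {n : ℕ | ∃ S : Finset (V × Fin 2),
      IsTotalDominatingSet H S ∧ S.card = n}.Nonempty := ⟨_, Finset.univ, huniv, rfl⟩
  have hBne : {n : ℕ | ∃ S : Finset (V × Fin 2),
      IsTotalRestrainedDominatingSet H S ∧ S.card = n}.Nonempty := by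
    refine ⟨_, Finset.univ, ⟨huniv, ?_⟩, rfl⟩
    intro v hv; exact absurd (Finset.mem_univ v) hv
  -- totalDominationNumber ≤ totalRestrainedDominationNumber
  obtain ⟨T, hT, hTcard⟩ := Nat.sInf_mem hBne
  have h1 : totalDominationNumber H ≤ totalRestrainedDominationNumber H := by
    exact le_trans (Nat.sInf_le ⟨T, hT.1, rfl⟩) (le_of_eq hTcard)
  -- a minimum total dominating set
  obtain ⟨S, hS, hScard⟩ := Nat.sInf_mem hAne
  -- every minimum total dominating set of a prism is restrained
  have hres : ∀ x : V × Fin 2, x ∉ S → ∃ u, u ∉ S ∧ H.Adj x u := by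
    intro x hx
    by_contra hcon
    push_neg at hcon
    have hbad : ∀ u, H.Adj x u → u ∈ S := by
      intro u ha
      by_contra hu
      exact hcon u hu ha
    -- the mate of x is in S
    have hadjmate : H.Adj x (x.1, x.2 + 1) := Or.inr ⟨fin2_ne_add_one x.2, rfl⟩
    have hmateS : (x.1, x.2 + 1) ∈ S := hbad _ hadjmate
    -- erasing the mate still gives a total dominating set
    have hTDS' : IsTotalDominatingSet H (S.erase (x.1, x.2 + 1)) := by
      intro w
      obtain ⟨z, hz, hwz⟩ := hS w
      by_cases hzx : z = (x.1, x.2 + 1)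
      · subst hzx
        rcases hwz with ⟨hG, h2⟩ | ⟨h2, h1⟩
        · -- w = (u, x.2+1) with G.Adj u x.1 : use its mate (w.1, x.2)
          refine ⟨(w.1, x.2), Finset.mem_erase.2 ⟨?_, ?_⟩, ?_⟩
          · intro h
            exact fin2_ne_add_one x.2 (congrArg Prod.snd h)
          · exact hbad _ (Or.inl ⟨hG.symm, rfl⟩)
          · exact Or.inr ⟨by rw [h2]; exact (fin2_ne_add_one x.2).symm, rfl⟩
        · -- w = x : find another neighbor of x in S
          have hw2 : w.2 = x.2 := fin2_eq_of_ne_add_one _ _ h2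
          have hwx : w = x := Prod.ext h1 hw2
          subst hwx
          obtain ⟨y, hy, hmy⟩ := hS (w.1, w.2 + 1)
          rcases hmy with ⟨hG, h2'⟩ | ⟨h2', h1'⟩
          · -- y = (u, w.2+1) with G.Adj w.1 u; use (y.1, w.2)
            refine ⟨(y.1, w.2), Finset.mem_erase.2 ⟨?_, ?_⟩, ?_⟩
            · intro h
              exact fin2_ne_add_one w.2 (congrArg Prod.snd h)
            · exact hbad _ (Or.inl ⟨hG, rfl⟩)
            · exact Or.inl ⟨hG, rfl⟩
          · -- y = w, contradicting w ∉ S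
            have hy2 : y.2 = w.2 := fin2_eq_of_ne_add_one _ _ (Ne.symm h2')
            have : y = w := Prod.ext h1'.symm hy2
            exact absurd (this ▸ hy) hx
      · exact ⟨z, Finset.mem_erase.2 ⟨hzx, hz⟩, hwz⟩
    -- contradiction with minimality of S
    have hle : sInf {n : ℕ | ∃ S : Finset (V × Fin 2),
        IsTotalDominatingSet H S ∧ S.card = n} ≤ (S.erase (x.1, x.2 + 1)).card :=
      Nat.sInf_le ⟨S.erase (x.1, x.2 + 1), hTDS', rfl⟩
    have hcard : (S.erase (x.1, x.2 + 1)).card = S.card - 1 :=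
      Finset.card_erase_of_mem hmateS
    have hpos : 0 < S.card := Finset.card_pos.2 ⟨_, hmateS⟩
    rw [hcard] at hle
    omega
  have h2 : totalRestrainedDominationNumber H ≤ totalDominationNumber H := by
    exact le_trans (Nat.sInf_le ⟨S, ⟨hS, hres⟩, rfl⟩) (le_of_eq hScard)
  exact le_antisymm h1 h2
end
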